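/- arXiv:2604.10114 — 2 statements merged into one kernel-verified Lean document; each statement's English description precedes it below -/
import Mathlib

section
/- Let Z be a nonempty finite type, q : Z → ℝ a probability vector with q z > 0 for every z, M : K → Z → ℝ a constraint matrix indexed by a finite type K, and b : K → ℝ. Let S = { p ∈ Δ(Z) : ∀ k, ∑_z M k z · p z ≥ b k }. If S is nonempty, then there exists a unique p* ∈ S such that KL(p*‖q) ≤ KL(p‖q) for every p ∈ S. -/
/-!
`p ↦ KL p q` is a separable sum of the functions `t ↦ t log (t / q z)`, each continuous and
strictly convex on `[0, ∞)` because `q z > 0`; hence it is continuous and strictly convex on the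
nonnegative orthant. The feasible set is the simplex cut by closed half-spaces, so it
is compact and convex: a minimiser exists by compactness, and it is unique since a strictly convex
function has at most one minimiser on a convex set.
-/

/-- A probability vector on a finite type `Z`. -/
def IsProbVec {Z : Type*} [Fintype Z] (p : Z → ℝ) : Prop :=
  (∀ z, 0 ≤ p z) ∧ ∑ z, p z = 1

/-- Kullback–Leibler divergence on a finite type.  Note that when `p z = 0`
the summand `p z * log (p z / q z)` is `0`, matching the convention. -/
noncomputable def KL {Z : Type*} [Fintype Z] (p q : Z → ℝ) : ℝ :=
  ∑ z, p z * Real.log (p z / q z)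

open Real Set Finset

theorem StrictConvexOn.sum_comp_eval {𝕜 ι : Type*} [Field 𝕜] [LinearOrder 𝕜]
    [IsStrictOrderedRing 𝕜] [Fintype ι] {s : Set 𝕜} {f : ι → 𝕜 → 𝕜} (hf : ∀ i, StrictConvexOn 𝕜 s (f i)) :
    StrictConvexOn 𝕜 (univ.pi fun _ => s) fun x => ∑ i, f i (x i) := by
  refine ⟨convex_pi fun i _ => (hf i).1, fun x hx y hy hxy a b ha hb hab => ?_⟩
  obtain ⟨i₀, hi₀⟩ := Function.ne_iff.mp hxy
  simp only [Pi.add_apply, Pi.smul_apply, smul_eq_mul, mul_sum, ← sum_add_distrib]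
  exact sum_lt_sum (fun i _ => (hf i).convexOn.2 (hx i trivial) (hy i trivial)
    ha.le hb.le hab) ⟨i₀, mem_univ _, (hf i₀).2 (hx i₀ trivial) (hy i₀ trivial) hi₀ ha hb hab⟩

theorem IsCompact.existsUnique_isMinOn {𝕜 E : Type*} [Field 𝕜] [LinearOrder 𝕜]
    [IsStrictOrderedRing 𝕜] [AddCommMonoid E] [Module 𝕜 E] [TopologicalSpace E]
    {s : Set E} {f : E → 𝕜} [TopologicalSpace 𝕜] [OrderClosedTopology 𝕜]
    (hs : IsCompact s) (hne : s.Nonempty) (hcont : ContinuousOn f s)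
    (hf : StrictConvexOn 𝕜 s f) : ∃! x, x ∈ s ∧ IsMinOn f s x := by
  obtain ⟨x, hx, hmin⟩ := hs.exists_isMinOn hne hcont
  exact ⟨x, ⟨hx, hmin⟩, fun y ⟨hy, hymin⟩ => hf.eq_of_isMinOn hymin hmin hy hx⟩

namespace Real

theorem mul_log_div_eq_sub {c : ℝ} (hc : c ≠ 0) (t : ℝ) :
    t * log (t / c) = t * log t - t * log c := by
  rcases eq_or_ne t 0 with rfl | ht
  · simp
  · rw [log_div ht hc, mul_sub]

theorem continuous_mul_log_div {c : ℝ} (hc : c ≠ 0) : Continuous fun t => t * log (t / c) := by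
  simp_rw [mul_log_div_eq_sub hc]
  exact continuous_mul_log.sub (continuous_id.mul continuous_const)

theorem strictConvexOn_mul_log_div {c : ℝ} (hc : c ≠ 0) :
    StrictConvexOn ℝ (Ici 0) fun t => t * log (t / c) := by
  simp_rw [mul_log_div_eq_sub hc]
  exact strictConvexOn_mul_log.sub_concaveOn
    (((LinearMap.mul ℝ ℝ).flip (log c)).concaveOn (convex_Ici 0))

end Real

theorem continuous_KL {Z : Type*} [Fintype Z] {q : Z → ℝ} (hq : ∀ z, q z ≠ 0) :
    Continuous fun p => KL p q :=
  continuous_finsetSum _ fun z _ => (Real.continuous_mul_log_div (hq z)).comp (continuous_apply z)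

theorem strictConvexOn_KL {Z : Type*} [Fintype Z] {q : Z → ℝ} (hq : ∀ z, q z ≠ 0) :
    StrictConvexOn ℝ (univ.pi fun _ => Ici 0) fun p => KL p q :=
  StrictConvexOn.sum_comp_eval fun z => Real.strictConvexOn_mul_log_div (hq z)

section Constraints

variable {Z K : Type*} [Fintype Z] (M : K → Z → ℝ) (b : K → ℝ)

theorem isClosed_setOf_forall_le_sum_mul : IsClosed {p : Z → ℝ | ∀ k, b k ≤ ∑ z, M k z * p z} :=
  ofPred_forall (fun k (p : Z → ℝ) => b k ≤ ∑ z, M k z * p z) ▸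
    isClosed_iInter fun k => isClosed_le continuous_const (by fun_prop)

theorem convex_setOf_forall_le_sum_mul : Convex ℝ {p : Z → ℝ | ∀ k, b k ≤ ∑ z, M k z * p z} := by
  rw [ofPred_forall]
  refine convex_iInter fun k => convex_halfSpace_ge (f := fun p : Z → ℝ => ∑ z, M k z * p z)
    ⟨fun p p' => ?_, fun c p => ?_⟩ (b k)
  · simp only [Pi.add_apply, mul_add, sum_add_distrib]
  · simp only [Pi.smul_apply, smul_eq_mul, mul_sum, mul_left_comm]

end Constraints

theorem kl_projection_existsUnique_general
    {Z K : Type*} [Fintype Z]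
    (q : Z → ℝ) (hq0 : ∀ z, 0 < q z)
    (M : K → Z → ℝ) (b : K → ℝ)
    (hS : ∃ p : Z → ℝ, IsProbVec p ∧ ∀ k, b k ≤ ∑ z, M k z * p z) :
    ∃! pstar : Z → ℝ,
      (IsProbVec pstar ∧ ∀ k, b k ≤ ∑ z, M k z * pstar z) ∧
      ∀ p : Z → ℝ, (IsProbVec p ∧ ∀ k, b k ≤ ∑ z, M k z * p z) →
        KL pstar q ≤ KL p q := by
  set S := stdSimplex ℝ Z ∩ {p | ∀ k, b k ≤ ∑ z, M k z * p z}
  have hq : ∀ z, q z ≠ 0 := fun z => (hq0 z).ne'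
  have hS_compact : IsCompact S :=
    (isCompact_stdSimplex ℝ Z).inter_right (isClosed_setOf_forall_le_sum_mul M b)
  have hS_convex : Convex ℝ S := (convex_stdSimplex ℝ Z).inter (convex_setOf_forall_le_sum_mul M b)
  have hS_pi : S ⊆ univ.pi fun _ => Ici 0 := fun p hp z _ => hp.1.1 z
  exact hS_compact.existsUnique_isMinOn hS (continuous_KL hq).continuousOn
    ((strictConvexOn_KL hq).subset hS_pi hS_convex)

/-- **Existence and uniqueness of the KL projection** onto the constrained
polytope `S = {p ∈ Δ(Z) : ∀ k, ∑ z, M k z * p z ≥ b k}`, provided `S ≠ ∅`. -/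
theorem kl_projection_existsUnique
    {Z K : Type*} [Fintype Z] [Nonempty Z] [Fintype K]
    (q : Z → ℝ) (hq : IsProbVec q) (hq0 : ∀ z, 0 < q z)
    (M : K → Z → ℝ) (b : K → ℝ)
    (hS : ∃ p : Z → ℝ, IsProbVec p ∧ ∀ k, b k ≤ ∑ z, M k z * p z) :
    ∃! pstar : Z → ℝ,
      (IsProbVec pstar ∧ ∀ k, b k ≤ ∑ z, M k z * pstar z) ∧
      ∀ p : Z → ℝ, (IsProbVec p ∧ ∀ k, b k ≤ ∑ z, M k z * p z) →
        KL pstar q ≤ KL p q :=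
  kl_projection_existsUnique_general q hq0 M b hS
end

section
/- Let X and Y be finite types, K a nonempty finite index type, and for each i ∈ K let pᵢ : X → Prop (primes) and sᵢ : Y → Prop (subs) be predicates, let Pᵢ be a probability vector on X with support(Pᵢ) = { x : pᵢ x } and Qᵢ a probability vector on Y with support(Qᵢ) = { y : sᵢ y }, and let θ : K → ℝ satisfy θ i > 0 for all i and ∑_i θ i = 1. Assume the primes are mutually exclusive: for i ≠ j there is no x with pᵢ x and pⱼ x. Then R(x,y) := ∑_i θ i · Pᵢ x · Qᵢ y is a probability vector on X × Y, and for every (x,y), R(x,y) > 0 if and only if there exists i with pᵢ x and sᵢ y; equivalently, support(R) equals the set of models of the formula Φ(x,y) = ⋁_i (pᵢ x ∧ sᵢ y). -/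
/-!
The weights `θ i` are positive and every term `θ i * P i x * Q i y` is nonnegative, so the mixture
is positive exactly when some product `P i x * Q i y` is, i.e. when `prime i x ∧ sub i y` for
some `i`. That the mixture sums to one follows by exchanging the sums: each product `P i ⊗ Q i`
has total mass one.
-/

open Finset

lemma mul_pos_iff_of_nonneg {a b : ℝ} (ha : 0 ≤ a) (hb : 0 ≤ b) :
    0 < a * b ↔ 0 < a ∧ 0 < b := by
  rw [(mul_nonneg ha hb).lt_iff_ne', ha.lt_iff_ne', hb.lt_iff_ne', mul_ne_zero_iff]

lemma Fintype.sum_mul_pos_iff {K : Type*} [Fintype K] {θ f : K → ℝ} (hθ : ∀ i, 0 < θ i)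
    (hf : ∀ i, 0 ≤ f i) : 0 < ∑ i, θ i * f i ↔ ∃ i, 0 < f i := by
  rw [Finset.sum_pos_iff_of_nonneg fun i _ => mul_nonneg (hθ i).le (hf i)]
  simp only [mem_univ, true_and, mul_pos_iff_of_pos_left (hθ _)]

namespace IsProbVec

variable {Z W : Type*} [Fintype Z] [Fintype W]

lemma prod {p : Z → ℝ} {q : W → ℝ} (hp : IsProbVec p) (hq : IsProbVec q) :
    IsProbVec fun zw : Z × W => p zw.1 * q zw.2 :=
  ⟨fun zw => mul_nonneg (hp.1 zw.1) (hq.1 zw.2), by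
    rw [Fintype.sum_prod_type, ← Fintype.sum_mul_sum, hp.2, hq.2, one_mul]⟩

lemma mixture {K : Type*} [Fintype K] {θ : K → ℝ} {p : K → Z → ℝ} (hθ : ∀ i, 0 ≤ θ i)
    (hθ1 : ∑ i, θ i = 1) (hp : ∀ i, IsProbVec (p i)) :
    IsProbVec fun z => ∑ i, θ i * p i z := by
  refine ⟨fun z => sum_nonneg fun i _ => mul_nonneg (hθ i) ((hp i).1 z), ?_⟩
  rw [sum_comm]
  simp only [← mul_sum, fun i => (hp i).2, mul_one, hθ1]

end IsProbVec

theorem psdd_decision_node_structural_nullity_general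
    {X Y K : Type*} [Fintype X] [Fintype Y] [Fintype K]
    (prime : K → X → Prop) (sub : K → Y → Prop)
    (P : K → X → ℝ) (Q : K → Y → ℝ)
    (hP : ∀ i, IsProbVec (P i)) (hQ : ∀ i, IsProbVec (Q i))
    (hPsupp : ∀ i, {x | 0 < P i x} = {x | prime i x})
    (hQsupp : ∀ i, {y | 0 < Q i y} = {y | sub i y})
    (θ : K → ℝ) (hθ : ∀ i, 0 < θ i) (hθ1 : ∑ i, θ i = 1) :
    IsProbVec (fun xy : X × Y => ∑ i, θ i * P i xy.1 * Q i xy.2) ∧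
    (∀ x y, 0 < ∑ i, θ i * P i x * Q i y ↔ ∃ i, prime i x ∧ sub i y) ∧
    {xy : X × Y | 0 < ∑ i, θ i * P i xy.1 * Q i xy.2} =
      {xy : X × Y | ∃ i, prime i xy.1 ∧ sub i xy.2} := by
  have hPQ : ∀ i x y, 0 < P i x * Q i y ↔ prime i x ∧ sub i y := fun i x y => by
    rw [mul_pos_iff_of_nonneg ((hP i).1 x) ((hQ i).1 y)]
    exact and_congr (Set.ext_iff.mp (hPsupp i) x) (Set.ext_iff.mp (hQsupp i) y)
  have hpos : ∀ x y, 0 < ∑ i, θ i * P i x * Q i y ↔ ∃ i, prime i x ∧ sub i y := fun x y => by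
    simp only [mul_assoc, ← hPQ]
    exact Fintype.sum_mul_pos_iff hθ fun i => mul_nonneg ((hP i).1 x) ((hQ i).1 y)
  have hmix := IsProbVec.mixture (fun i => (hθ i).le) hθ1 fun i => (hP i).prod (hQ i)
  simp only [← mul_assoc] at hmix
  exact ⟨hmix, hpos, Set.ext fun xy => hpos xy.1 xy.2⟩

/-- **Structural nullity at a PSDD decision node**: a mixture of decomposable
products over mutually exclusive primes is a probability vector whose support
is exactly the set of models of `Φ(x,y) = ⋁ i, prime i x ∧ sub i y`. -/
theorem psdd_decision_node_structural_nullity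
    {X Y K : Type*} [Fintype X] [Fintype Y] [Fintype K] [Nonempty K]
    (prime : K → X → Prop) (sub : K → Y → Prop)
    (P : K → X → ℝ) (Q : K → Y → ℝ)
    (hP : ∀ i, IsProbVec (P i)) (hQ : ∀ i, IsProbVec (Q i))
    (hPsupp : ∀ i, {x | 0 < P i x} = {x | prime i x})
    (hQsupp : ∀ i, {y | 0 < Q i y} = {y | sub i y})
    (θ : K → ℝ) (hθ : ∀ i, 0 < θ i) (hθ1 : ∑ i, θ i = 1)
    (hexcl : ∀ i j, i ≠ j → ¬ ∃ x, prime i x ∧ prime j x) :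
    IsProbVec (fun xy : X × Y => ∑ i, θ i * P i xy.1 * Q i xy.2) ∧
    (∀ x y, 0 < ∑ i, θ i * P i x * Q i y ↔ ∃ i, prime i x ∧ sub i y) ∧
    {xy : X × Y | 0 < ∑ i, θ i * P i xy.1 * Q i xy.2} =
      {xy : X × Y | ∃ i, prime i xy.1 ∧ sub i xy.2} :=
  psdd_decision_node_structural_nullity_general prime sub P Q hP hQ hPsupp hQsupp θ hθ hθ1
end
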